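/- For every m ≥ 0 one has x_m·E − q^{c+2m}·E·x_m = [m+1]·x_{m+1}. (This identity holds in any associative algebra; no relations between E and G are needed.) -/

import Mathlib

open scoped BigOperators

noncomputable section

def q : RatFunc ℚ := RatFunc.X

/-- Quantum integer `[n] = (q^n - q^{-n})/(q - q^{-1})`. -/
def qi (n : ℤ) : RatFunc ℚ := (q ^ n - q ^ (-n)) / (q - q⁻¹)

/-- Quantum factorial `[n]! = [1][2]⋯[n]`. -/
def qfac : ℕ → RatFunc ℚ
  | 0 => 1
  | n + 1 => qfac n * qi (n + 1)

lemma q_ne_zero : q ≠ 0 := RatFunc.X_ne_zero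

lemma q_pow_ne_one {k : ℕ} (hk : k ≠ 0) : q ^ k ≠ 1 := by
  intro h
  have hX : (Polynomial.X : Polynomial ℚ) ^ k = 1 := by
    apply IsFractionRing.injective (Polynomial ℚ) (RatFunc ℚ)
    simpa [q, ← RatFunc.algebraMap_X, map_pow] using h
  have := congrArg Polynomial.natDegree hX
  simp [Polynomial.natDegree_X_pow] at this
  exact hk this

lemma q_zpow_ne_one {k : ℤ} (hk : 0 < k) : q ^ k ≠ 1 := by
  intro h
  apply q_pow_ne_one (k := k.toNat) (by omega)
  rw [← zpow_natCast, Int.toNat_of_nonneg hk.le]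
  exact h

lemma qsub_ne_zero : q - q⁻¹ ≠ 0 := by
  rw [sub_ne_zero]
  intro h
  apply q_pow_ne_one (k := 2) (by norm_num)
  rw [pow_two]
  nth_rewrite 1 [h]
  exact inv_mul_cancel₀ q_ne_zero

lemma qi_ne_zero {n : ℤ} (hn : 0 < n) : qi n ≠ 0 := by
  apply div_ne_zero _ qsub_ne_zero
  rw [sub_ne_zero]
  intro h
  apply q_zpow_ne_one (k := 2 * n) (by omega)
  have : q ^ n * q ^ n = q ^ n * q ^ (-n) := by rw [← h]
  rw [← zpow_add₀ q_ne_zero, ← zpow_add₀ q_ne_zero] at this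
  simpa [two_mul] using this

lemma qfac_ne_zero (n : ℕ) : qfac n ≠ 0 := by
  induction n with
  | zero => simp [qfac]
  | succ k ih =>
    rw [qfac]
    exact mul_ne_zero ih (qi_ne_zero (by positivity))

lemma qi_zero : qi 0 = 0 := by simp [qi]

lemma qi_add (a b : ℤ) : qi a + q ^ (a + b) * qi b = q ^ b * qi (a + b) := by
  have hx : q ^ a ≠ 0 := zpow_ne_zero _ q_ne_zero
  have hy : q ^ b ≠ 0 := zpow_ne_zero _ q_ne_zero
  rw [qi, qi, qi, zpow_add₀ q_ne_zero, neg_add, zpow_add₀ q_ne_zero, zpow_neg, zpow_neg]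
  set x := q ^ a with hxd
  set y := q ^ b with hyd
  have hx : x ≠ 0 := zpow_ne_zero _ q_ne_zero
  have hy : y ≠ 0 := zpow_ne_zero _ q_ne_zero
  have key : x - x⁻¹ + x * y * (y - y⁻¹) = y * (x * y - (x * y)⁻¹) := by
    field_simp
    ring
  rw [mul_div_assoc', mul_div_assoc', ← add_div, key, mul_inv]

/-- Divided power `E^{(n)} = E^n/[n]!`. -/
def dpow {A : Type*} [Ring A] [Algebra (RatFunc ℚ) A] (E : A) (n : ℕ) : A :=
  (qfac n)⁻¹ • E ^ n

lemma dpow_mul_self {A : Type*} [Ring A] [Algebra (RatFunc ℚ) A] (E : A) (s : ℕ) :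
    dpow E s * E = qi ((s : ℤ) + 1) • dpow E (s + 1) := by
  rw [dpow, dpow, smul_mul_assoc, ← pow_succ, smul_smul]
  congr 1
  rw [show qfac (s + 1) = qfac s * qi ((s : ℤ) + 1) from rfl]
  have h1 := qfac_ne_zero s
  have h2 : qi ((s : ℤ) + 1) ≠ 0 := qi_ne_zero (by positivity)
  field_simp

lemma self_mul_dpow {A : Type*} [Ring A] [Algebra (RatFunc ℚ) A] (E : A) (s : ℕ) :
    E * dpow E s = qi ((s : ℤ) + 1) • dpow E (s + 1) := by
  rw [dpow, dpow, mul_smul_comm, ← pow_succ', smul_smul]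
  congr 1
  rw [show qfac (s + 1) = qfac s * qi ((s : ℤ) + 1) from rfl]
  have h1 := qfac_ne_zero s
  have h2 : qi ((s : ℤ) + 1) ≠ 0 := qi_ne_zero (by positivity)
  field_simp

/-- `x_m = Σ_{r+s=m} (−1)^r q^{r(m+c−1)} E^{(r)} G E^{(s)}`. -/
def xv {A : Type*} [Ring A] [Algebra (RatFunc ℚ) A] (E G : A) (c : ℤ) (m : ℕ) : A :=
  ∑ r ∈ Finset.range (m + 1),
    ((-1 : RatFunc ℚ) ^ r * q ^ ((r : ℤ) * ((m : ℤ) + c - 1))) •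
      (dpow E r * G * dpow E (m - r))

/-- For every m ≥ 0, `x_m·E − q^{c+2m}·E·x_m = [m+1]·x_{m+1}`, in any associative
algebra over ℚ(q), with no relations between E and G. -/
theorem xv_mul_E {A : Type*} [Ring A] [Algebra (RatFunc ℚ) A] (E G : A) (c : ℤ) (m : ℕ) :
    xv E G c m * E - q ^ (c + 2 * (m : ℤ)) • (E * xv E G c m)
      = qi ((m : ℤ) + 1) • xv E G c (m + 1) := by
  have h1 : xv E G c m * E
      = ∑ r ∈ Finset.range (m + 2),
          ((-1 : RatFunc ℚ) ^ r * q ^ ((r : ℤ) * ((m : ℤ) + c - 1))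
            * qi ((m : ℤ) + 1 - r)) • (dpow E r * G * dpow E (m + 1 - r)) := by
    rw [xv, Finset.sum_mul, Finset.sum_range_succ
      (f := fun r => ((-1 : RatFunc ℚ) ^ r * q ^ ((r : ℤ) * ((m : ℤ) + c - 1))
            * qi ((m : ℤ) + 1 - r)) • (dpow E r * G * dpow E (m + 1 - r)))]
    have h0 : qi ((m : ℤ) + 1 - ((m + 1 : ℕ) : ℤ)) = 0 := by
      push_cast; ring_nf; exact qi_zero
    rw [h0]
    simp only [mul_zero, zero_smul, add_zero]
    refine Finset.sum_congr rfl fun r hr => ?_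
    rw [Finset.mem_range] at hr
    have hrm : r ≤ m := by omega
    rw [smul_mul_assoc, mul_assoc, dpow_mul_self, mul_smul_comm, smul_smul]
    have hnat : m - r + 1 = m + 1 - r := by omega
    have hcast : ((m - r : ℕ) : ℤ) + 1 = (m : ℤ) + 1 - r := by
      push_cast [Nat.cast_sub hrm]; ring
    rw [hnat, hcast]
  have h2 : q ^ (c + 2 * (m : ℤ)) • (E * xv E G c m)
      = ∑ r ∈ Finset.range (m + 2),
          (-((-1 : RatFunc ℚ) ^ r * q ^ ((r : ℤ) * ((m : ℤ) + c - 1))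
            * (q ^ ((m : ℤ) + 1) * qi r))) • (dpow E r * G * dpow E (m + 1 - r)) := by
    rw [xv, Finset.mul_sum, Finset.smul_sum, Finset.sum_range_succ'
      (f := fun r => (-((-1 : RatFunc ℚ) ^ r * q ^ ((r : ℤ) * ((m : ℤ) + c - 1))
            * (q ^ ((m : ℤ) + 1) * qi r))) • (dpow E r * G * dpow E (m + 1 - r)))]
    rw [show qi ((0 : ℕ) : ℤ) = 0 from qi_zero]
    simp only [mul_zero, neg_zero, zero_smul, add_zero]
    refine Finset.sum_congr rfl fun r hr => ?_
    rw [Finset.mem_range] at hr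
    rw [mul_smul_comm, smul_smul,
      show E * (dpow E r * G * dpow E (m - r)) = E * dpow E r * G * dpow E (m - r) by
        rw [← mul_assoc, ← mul_assoc],
      self_mul_dpow, smul_mul_assoc, smul_mul_assoc, smul_smul]
    have hnat : m + 1 - (r + 1) = m - r := by omega
    rw [hnat]
    congr 1
    have hcast : ((r + 1 : ℕ) : ℤ) = (r : ℤ) + 1 := by push_cast; ring
    rw [hcast, pow_succ]
    have he : q ^ (c + 2 * (m : ℤ)) * q ^ ((r : ℤ) * ((m : ℤ) + c - 1))
        = q ^ (((r : ℤ) + 1) * ((m : ℤ) + c - 1)) * q ^ ((m : ℤ) + 1) := by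
      rw [← zpow_add₀ q_ne_zero, ← zpow_add₀ q_ne_zero]
      congr 1
      ring
    calc q ^ (c + 2 * (m : ℤ)) * ((-1 : RatFunc ℚ) ^ r * q ^ ((r : ℤ) * ((m : ℤ) + c - 1)))
          * qi ((r : ℤ) + 1)
        = ((-1 : RatFunc ℚ) ^ r * qi ((r : ℤ) + 1))
            * (q ^ (c + 2 * (m : ℤ)) * q ^ ((r : ℤ) * ((m : ℤ) + c - 1))) := by ring
      _ = ((-1 : RatFunc ℚ) ^ r * qi ((r : ℤ) + 1))
            * (q ^ (((r : ℤ) + 1) * ((m : ℤ) + c - 1)) * q ^ ((m : ℤ) + 1)) := by rw [he]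
      _ = -((-1 : RatFunc ℚ) ^ r * -1 * q ^ (((r : ℤ) + 1) * ((m : ℤ) + c - 1))
            * (q ^ ((m : ℤ) + 1) * qi ((r : ℤ) + 1))) := by ring
  rw [h1, h2, ← Finset.sum_sub_distrib]
  rw [xv, Finset.smul_sum]
  refine Finset.sum_congr rfl fun r hr => ?_
  rw [← sub_smul, smul_smul]
  congr 1
  rw [sub_neg_eq_add]
  have hcast : ((m + 1 : ℕ) : ℤ) = (m : ℤ) + 1 := by push_cast; ring
  rw [hcast]
  have key : qi ((m : ℤ) + 1 - r) + q ^ ((m : ℤ) + 1) * qi (r : ℤ)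
      = q ^ (r : ℤ) * qi ((m : ℤ) + 1) := by
    have h := qi_add ((m : ℤ) + 1 - r) (r : ℤ)
    rw [show (m : ℤ) + 1 - (r : ℤ) + (r : ℤ) = (m : ℤ) + 1 by ring] at h
    exact h
  have he : q ^ ((r : ℤ) * ((m : ℤ) + c - 1)) * q ^ (r : ℤ)
      = q ^ ((r : ℤ) * ((m : ℤ) + 1 + c - 1)) := by
    rw [← zpow_add₀ q_ne_zero]
    congr 1
    ring
  calc (-1 : RatFunc ℚ) ^ r * q ^ ((r : ℤ) * ((m : ℤ) + c - 1)) * qi ((m : ℤ) + 1 - r)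
        + (-1 : RatFunc ℚ) ^ r * q ^ ((r : ℤ) * ((m : ℤ) + c - 1))
          * (q ^ ((m : ℤ) + 1) * qi (r : ℤ))
      = (-1 : RatFunc ℚ) ^ r * q ^ ((r : ℤ) * ((m : ℤ) + c - 1))
          * (qi ((m : ℤ) + 1 - r) + q ^ ((m : ℤ) + 1) * qi (r : ℤ)) := by ring
    _ = (-1 : RatFunc ℚ) ^ r * q ^ ((r : ℤ) * ((m : ℤ) + c - 1))
          * (q ^ (r : ℤ) * qi ((m : ℤ) + 1)) := by rw [key]
    _ = qi ((m : ℤ) + 1) * ((-1 : RatFunc ℚ) ^ r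
          * (q ^ ((r : ℤ) * ((m : ℤ) + c - 1)) * q ^ (r : ℤ))) := by ring
    _ = qi ((m : ℤ) + 1) * ((-1 : RatFunc ℚ) ^ r
          * q ^ ((r : ℤ) * ((m : ℤ) + 1 + c - 1))) := by rw [he]
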